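/- Let $d \ge 2$ and let $[M]$ be a $d$-dimensional flat torus $\mathbb{R}^d / \{z_1 v_1 + \cdots + z_d v_d : z_i \in \mathbb{Z}\}$ for linearly independent $v_1, \ldots, v_d$. Suppose the rigidity estimate holds on every ball $B \subseteq \mathbb{R}^d$: for all $V \in L^2(B, \mathbb{R}^{d\times d})$ with $dV \in L^p(B)$ there exists $R \in SO(d)$ with $\|V - R\|_{L^2(B)} \le C_1(B)\|\mathrm{dist}(V, SO(d))\|_{L^2(B)} + C_2(B,p)\|dV\|_{L^p(B)}$. Then there exist constants $C_1([M])$ and $C_2([M],p)$ such that for all $V \in L^2([M], \mathbb{R}^{d\times d})$ with $dV \in L^p([M])$ there exists $R \in SO(d)$ with $\|V - R\|_{L^2([M])} \le C_1([M])\|\mathrm{dist}(V, SO(d))\|_{L^2([M])} + C_2([M],p)\|dV\|_{L^p([M])}$; moreover one can take $C_1([M]) = \sqrt{n}\, C_1(B)$ and $C_2([M],p) = n^{1/p} C_2(B,p)$, where $B$ is a ball containing a fundamental domain $M$ of the torus and $n$ is the number of translated copies of $M$ needed to cover $B$. -/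

import Mathlib

open MeasureTheory
noncomputable section

/-- Euclidean `d`-space. -/
abbrev E (d : ℕ) := EuclideanSpace ℝ (Fin d)
/-- Real `d × d` matrices. -/
abbrev Mat (d : ℕ) := Matrix (Fin d) (Fin d) ℝ

/-- The special orthogonal group `SO(d)` as a set of matrices. -/
def SO (d : ℕ) : Set (Mat d) := {R | R * R.transpose = 1 ∧ R.det = 1}

/-- Frobenius norm of a matrix. -/
def fnorm {d : ℕ} (M : Mat d) : ℝ := Real.sqrt (∑ i, ∑ j, (M i j) ^ 2)

/-- Distance of a matrix to `SO(d)` in the Frobenius norm. -/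
def distSO {d : ℕ} (A : Mat d) : ℝ := sInf ((fun Q => fnorm (A - Q)) '' SO d)

/-- Smooth test functions compactly supported in the interior of `A`. -/
def IsTest {d : ℕ} (A : Set (E d)) (φ : E d → ℝ) : Prop :=
  ContDiff ℝ (⊤ : ℕ∞) φ ∧ HasCompactSupport φ ∧ tsupport φ ⊆ interior A

/-- `k`-th partial derivative of a scalar function. -/
def pd {d : ℕ} (φ : E d → ℝ) (k : Fin d) (x : E d) : ℝ :=
  fderiv ℝ φ x (EuclideanSpace.single k 1)

/-- `W i k l` represents `∂ₖ V_{il} - ∂ₗ V_{ik}` weakly on `A`, i.e. `W` is the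
row-wise weak exterior derivative `dV` of `V` on `A`. -/
def HasWeakCurl {d : ℕ} (A : Set (E d)) (V : E d → Mat d)
    (W : Fin d → Fin d → Fin d → E d → ℝ) : Prop :=
  ∀ i k l : Fin d, ∀ φ : E d → ℝ, IsTest A φ →
    (∫ x in A, (V x i l * pd φ k x - V x i k * pd φ l x)) =
      -∫ x in A, W i k l x * φ x

/-- `L²`-norm of a scalar function over a set `A`. -/
def L2norm {d : ℕ} (A : Set (E d)) (f : E d → ℝ) : ℝ :=
  (∫ x in A, (f x) ^ 2) ^ (1/2 : ℝ)

/-- The `L^p`-norm `‖dV‖_{L^p(A)}` of the exterior derivative represented by `W`. -/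
def LpCurlNorm {d : ℕ} (A : Set (E d)) (W : Fin d → Fin d → Fin d → E d → ℝ)
    (p : ℝ) : ℝ :=
  (∑ i : Fin d, ∑ k : Fin d, ∑ l : Fin d,
      if k < l then ∫ x in A, |W i k l x| ^ p else 0) ^ (1/p)

/-- A function on `ℝ^d` is periodic with respect to the lattice generated by
`v 0, …, v (d-1)`; such functions are exactly the functions on the torus `[M]`. -/
def LatticePeriodic {d : ℕ} {X : Type*} (v : Fin d → E d) (f : E d → X) : Prop :=
  ∀ (z : Fin d → ℤ) (x : E d), f (x + ∑ i, (z i : ℝ) • v i) = f x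



variable {d : ℕ}

lemma aux_restrict_image (c : E d) (M : Set (E d)) :
    volume.restrict ((fun x => x + c) '' M)
      = Measure.map (fun x => x + c) (volume.restrict M) := by
  have emb : MeasurableEmbedding (fun x : E d => x + c) :=
    (Homeomorph.addRight c).measurableEmbedding
  have h1 : Measure.map (fun x : E d => x + c) volume = volume :=
    (measurePreserving_add_right volume c).map_eq
  have h2 : (fun x : E d => x + c) ⁻¹' ((fun x : E d => x + c) '' M) = M :=
    Set.preimage_image_eq M (add_left_injective c)
  calc volume.restrict ((fun x => x + c) '' M)
      = (Measure.map (fun x : E d => x + c) volume).restrict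
          ((fun x => x + c) '' M) := by rw [h1]
    _ = _ := by rw [emb.restrict_map, h2]

lemma aux_lintegral_image (c : E d) (M : Set (E d)) (h : E d → ENNReal)
    (hper : ∀ x, h (x + c) = h x) :
    ∫⁻ x in (fun x => x + c) '' M, h x = ∫⁻ x in M, h x := by
  have emb : MeasurableEmbedding (fun x : E d => x + c) :=
    (Homeomorph.addRight c).measurableEmbedding
  rw [aux_restrict_image, emb.lintegral_map]
  simp [hper]

lemma aux_aesm_image (c : E d) (M : Set (E d)) (g : E d → ℝ) (hper : ∀ x, g (x + c) = g x)
    (hg : AEStronglyMeasurable g (volume.restrict M)) :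
    AEStronglyMeasurable g (volume.restrict ((fun x => x + c) '' M)) := by
  have emb : MeasurableEmbedding (fun x : E d => x + c) :=
    (Homeomorph.addRight c).measurableEmbedding
  rw [aux_restrict_image, emb.aestronglyMeasurable_map_iff]
  simpa [Function.comp_def, hper] using hg

lemma aux_integrableOn_image (c : E d) (M : Set (E d)) (g : E d → ℝ)
    (hper : ∀ x, g (x + c) = g x) (hg : IntegrableOn g M volume) :
    IntegrableOn g ((fun x => x + c) '' M) volume := by
  unfold IntegrableOn
  have emb : MeasurableEmbedding (fun x : E d => x + c) :=
    (Homeomorph.addRight c).measurableEmbedding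
  rw [aux_restrict_image, emb.integrable_map_iff]
  simp only [Function.comp_def, hper]; exact hg
lemma aux_integral_image (c : E d) (M : Set (E d)) (g : E d → ℝ)
    (hper : ∀ x, g (x + c) = g x) :
    ∫ x in (fun x => x + c) '' M, g x = ∫ x in M, g x := by
  have emb : MeasurableEmbedding (fun x : E d => x + c) :=
    (Homeomorph.addRight c).measurableEmbedding
  rw [aux_restrict_image, emb.integral_map]
  simp [hper]

lemma aux_lintegral_cover {n : ℕ} (c : Fin n → E d) (M B : Set (E d))
    (hcov : B ⊆ ⋃ j, (fun x => x + c j) '' M) (h : E d → ENNReal)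
    (hper : ∀ j x, h (x + c j) = h x) :
    ∫⁻ x in B, h x ≤ n * ∫⁻ x in M, h x := by
  calc ∫⁻ x in B, h x ≤ ∫⁻ x in ⋃ j, (fun x => x + c j) '' M, h x :=
        lintegral_mono_set hcov
    _ ≤ ∑' j : Fin n, ∫⁻ x in (fun x => x + c j) '' M, h x := lintegral_iUnion_le _ _
    _ = ∑ j : Fin n, ∫⁻ x in M, h x := by
        rw [tsum_fintype]
        exact Finset.sum_congr rfl fun j _ => aux_lintegral_image _ _ _ (hper j)
    _ = n * ∫⁻ x in M, h x := by simp [Finset.sum_const, nsmul_eq_mul]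

lemma aux_memLp_cover {n : ℕ} (c : Fin n → E d) (M B : Set (E d))
    (hcov : B ⊆ ⋃ j, (fun x => x + c j) '' M)
    (q : ENNReal) (hq0 : q ≠ 0) (hqt : q ≠ ⊤) (g : E d → ℝ)
    (hper : ∀ j x, g (x + c j) = g x)
    (hg : MemLp g q (volume.restrict M)) :
    MemLp g q (volume.restrict B) := by
  have aesmU : AEStronglyMeasurable g (volume.restrict (⋃ j, (fun x => x + c j) '' M)) :=
    aestronglyMeasurable_iUnion_iff.2 fun j => aux_aesm_image _ _ _ (hper j) hg.1
  have aesmB : AEStronglyMeasurable g (volume.restrict B) :=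
    aesmU.mono_measure (Measure.restrict_mono hcov le_rfl)
  refine ⟨aesmB, ?_⟩
  have hqt' : 0 < q.toReal := ENNReal.toReal_pos hq0 hqt
  rw [eLpNorm_eq_lintegral_rpow_enorm_toReal hq0 hqt]
  have hfin : ∫⁻ x in M, (‖g x‖₊ : ENNReal) ^ q.toReal < ⊤ := by
    have := hg.2
    rw [eLpNorm_eq_lintegral_rpow_enorm_toReal hq0 hqt] at this
    have := (ENNReal.rpow_lt_top_iff_of_pos (by positivity : (0:ℝ) < 1 / q.toReal)).1 this
    exact this
  have key : ∫⁻ x in B, (‖g x‖₊ : ENNReal) ^ q.toReal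
      ≤ n * ∫⁻ x in M, (‖g x‖₊ : ENNReal) ^ q.toReal :=
    aux_lintegral_cover c M B hcov _ (fun j x => by rw [hper j x])
  have : ∫⁻ x in B, (‖g x‖₊ : ENNReal) ^ q.toReal < ⊤ :=
    lt_of_le_of_lt key (ENNReal.mul_lt_top (by simp) hfin)
  exact ENNReal.rpow_lt_top_of_nonneg (by positivity) this.ne

lemma aux_integral_cover {n : ℕ} (c : Fin n → E d) (M B : Set (E d)) (hMB : M ⊆ B)
    (hcov : B ⊆ ⋃ j, (fun x => x + c j) '' M)
    (g : E d → ℝ) (hg0 : ∀ x, 0 ≤ g x) (hper : ∀ j x, g (x + c j) = g x) :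
    ∫ x in B, g x ≤ n * ∫ x in M, g x := by
  by_cases hB : IntegrableOn g B volume
  · have hM : IntegrableOn g M volume := hB.mono_set hMB
    have e1 : ∫ x in B, g x = (∫⁻ x in B, ENNReal.ofReal (g x)).toReal :=
      integral_eq_lintegral_of_nonneg_ae (Filter.Eventually.of_forall hg0) hB.1
    have e2 : ∫ x in M, g x = (∫⁻ x in M, ENNReal.ofReal (g x)).toReal :=
      integral_eq_lintegral_of_nonneg_ae (Filter.Eventually.of_forall hg0) hM.1
    have hfin : ∫⁻ x in M, ENNReal.ofReal (g x) < ⊤ := hM.lintegral_lt_top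
    have key : ∫⁻ x in B, ENNReal.ofReal (g x) ≤ n * ∫⁻ x in M, ENNReal.ofReal (g x) :=
      aux_lintegral_cover c M B hcov _ (fun j x => by rw [hper j x])
    rw [e1, e2]
    calc (∫⁻ x in B, ENNReal.ofReal (g x)).toReal
        ≤ ((n : ENNReal) * ∫⁻ x in M, ENNReal.ofReal (g x)).toReal :=
          ENNReal.toReal_mono (ENNReal.mul_lt_top (by simp) hfin).ne key
      _ = n * (∫⁻ x in M, ENNReal.ofReal (g x)).toReal := by
          rw [ENNReal.toReal_mul]; simp
  · rw [integral_undef hB]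
    exact mul_nonneg (Nat.cast_nonneg n) (integral_nonneg hg0)

lemma aux_integral_mono_MB {n : ℕ} (c : Fin n → E d) (M B : Set (E d)) (hMB : M ⊆ B)
    (hcov : B ⊆ ⋃ j, (fun x => x + c j) '' M)
    (g : E d → ℝ) (hg0 : ∀ x, 0 ≤ g x) (hper : ∀ j x, g (x + c j) = g x) :
    ∫ x in M, g x ≤ ∫ x in B, g x := by
  by_cases hB : IntegrableOn g B volume
  · exact setIntegral_mono_set hB (Filter.Eventually.of_forall hg0)
      (HasSubset.Subset.eventuallyLE hMB)
  · have hM : ¬ IntegrableOn g M volume := by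
      intro hM
      exact hB <| (integrableOn_finite_iUnion.2
        fun j => aux_integrableOn_image _ _ _ (hper j) hM).mono_set hcov
    rw [integral_undef hB, integral_undef hM]

variable {d : ℕ}

lemma fnorm_nonneg' (A : Mat d) : 0 ≤ fnorm A := Real.sqrt_nonneg _

lemma one_mem_SO : (1 : Mat d) ∈ SO d := by
  constructor
  · rw [Matrix.transpose_one, one_mul]
  · exact Matrix.det_one

lemma SO_nonempty : (SO d).Nonempty := ⟨1, one_mem_SO⟩

lemma fnorm_of_SO {R : Mat d} (hR : R ∈ SO d) : fnorm R = Real.sqrt d := by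
  unfold fnorm
  congr 1
  have h := hR.1
  have key : ∀ i : Fin d, ∑ j, R i j ^ 2 = 1 := by
    intro i
    have := congrFun (congrFun h i) i
    rw [Matrix.mul_apply] at this
    simp only [Matrix.transpose_apply] at this
    rw [Matrix.one_apply_eq] at this
    calc ∑ j, R i j ^ 2 = ∑ j, R i j * R i j := by simp [sq]
      _ = 1 := this
  rw [Finset.sum_congr rfl (fun i _ => key i)]
  simp

lemma distSO_zero_eq : distSO (0 : Mat d) = Real.sqrt d := by
  unfold distSO
  have himg : (fun Q => fnorm ((0 : Mat d) - Q)) '' SO d = {Real.sqrt d} := by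
    apply Set.eq_singleton_iff_nonempty_unique_mem.2
    constructor
    · exact ⟨fnorm ((0:Mat d) - 1), ⟨1, one_mem_SO, rfl⟩⟩
    · rintro y ⟨Q, hQ, rfl⟩
      have : fnorm ((0:Mat d) - Q) = fnorm Q := by
        unfold fnorm; congr 1; apply Finset.sum_congr rfl; intro i _
        apply Finset.sum_congr rfl; intro j _
        simp [Matrix.sub_apply]
      show fnorm ((0:Mat d) - Q) = Real.sqrt d
      rw [this, fnorm_of_SO hQ]
  rw [himg, csInf_singleton]

lemma distSO_eq_zero_of_mem {A : Mat d} (hA : A ∈ SO d) : distSO A = 0 := by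
  unfold distSO
  apply le_antisymm
  · apply csInf_le
    · exact ⟨0, by rintro y ⟨Q, _, rfl⟩; exact fnorm_nonneg' _⟩
    · refine ⟨A, hA, ?_⟩
      unfold fnorm
      simp
  · apply le_csInf (Set.Nonempty.image _ SO_nonempty)
    rintro y ⟨Q, _, rfl⟩; exact fnorm_nonneg' _

lemma L2norm_nonneg (A : Set (E d)) (f : E d → ℝ) : 0 ≤ L2norm A f :=
  Real.rpow_nonneg (integral_nonneg fun x => sq_nonneg _) _

lemma LpCurlNorm_nonneg (A : Set (E d)) (W : Fin d → Fin d → Fin d → E d → ℝ) (p : ℝ) :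
    0 ≤ LpCurlNorm A W p := by
  apply Real.rpow_nonneg
  apply Finset.sum_nonneg; intro i _
  apply Finset.sum_nonneg; intro k _
  apply Finset.sum_nonneg; intro l _
  split
  · exact integral_nonneg fun x => Real.rpow_nonneg (abs_nonneg _) _
  · exact le_rfl

lemma L2norm_const (A : Set (E d)) (a : ℝ) (ha : 0 ≤ a) :
    L2norm A (fun _ => a) = ((volume A).toReal) ^ (1/2 : ℝ) * a := by
  unfold L2norm
  rw [setIntegral_const]
  rw [smul_eq_mul, Real.mul_rpow measureReal_nonneg (sq_nonneg a)]
  congr 1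
  rw [← Real.rpow_natCast a 2, ← Real.rpow_mul ha]
  norm_num

lemma ball_finiteMeasure (x₀ : E d) (ρ : ℝ) :
    IsFiniteMeasure (volume.restrict (Metric.ball x₀ ρ)) := by
  constructor
  rw [Measure.restrict_apply_univ]
  exact measure_ball_lt_top

lemma aux_C1_nonneg {p : ℝ} (hd : 1 ≤ d) (x₀ : E d) (ρ : ℝ) (hρ : 0 < ρ) (hp0 : p ≠ 0)
    (c1 c2 : ℝ)
    (h : ∀ (V : E d → Mat d) (W : Fin d → Fin d → Fin d → E d → ℝ),
        MemLp (fun x => fnorm (V x)) 2 (volume.restrict (Metric.ball x₀ ρ)) →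
        HasWeakCurl (Metric.ball x₀ ρ) V W →
        (∀ i k l : Fin d, MemLp (W i k l) (ENNReal.ofReal p)
          (volume.restrict (Metric.ball x₀ ρ))) →
        ∃ R ∈ SO d, L2norm (Metric.ball x₀ ρ) (fun x => fnorm (V x - R)) ≤
          c1 * L2norm (Metric.ball x₀ ρ) (fun x => distSO (V x)) +
            c2 * LpCurlNorm (Metric.ball x₀ ρ) W p) :
    0 ≤ c1 := by
  have : IsFiniteMeasure (volume.restrict (Metric.ball x₀ ρ)) := ball_finiteMeasure x₀ ρ
  obtain ⟨R, hR, hineq⟩ := h (fun _ => 0) (fun _ _ _ _ => 0)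
    (by simpa [fnorm] using memLp_const (0:ℝ))
    (by intro i k l φ _; simp)
    (fun i k l => memLp_const (0:ℝ))
  have h1 : (fun x : E d => fnorm ((0:Mat d) - R)) = fun _ => Real.sqrt d := by
    funext x
    have : fnorm ((0:Mat d) - R) = fnorm R := by
      unfold fnorm; congr 1
      exact Finset.sum_congr rfl fun i _ => Finset.sum_congr rfl fun j _ => by
        simp [Matrix.sub_apply]
    rw [this, fnorm_of_SO hR]
  have h2 : (fun x : E d => distSO ((fun _ : E d => (0 : Mat d)) x)) = fun _ => Real.sqrt d := by
    funext x; exact distSO_zero_eq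
  have h3 : LpCurlNorm (Metric.ball x₀ ρ) (fun _ _ _ (_ : E d) => (0:ℝ)) p = 0 := by
    unfold LpCurlNorm
    rw [show (∑ i : Fin d, ∑ k : Fin d, ∑ l : Fin d,
      if k < l then ∫ x in Metric.ball x₀ ρ, |(0:ℝ)| ^ p else 0) = 0 by
        simp [Real.zero_rpow hp0]]
    rw [Real.zero_rpow (by simpa using hp0)]
  rw [h1] at hineq
  rw [h2, h3, mul_zero, add_zero] at hineq
  rw [L2norm_const _ _ (Real.sqrt_nonneg _)] at hineq
  have hvol : 0 < (volume (Metric.ball x₀ ρ)).toReal := by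
    apply ENNReal.toReal_pos (Metric.measure_ball_pos volume x₀ hρ).ne'
      measure_ball_lt_top.ne
  have hd0 : (0:ℝ) < Real.sqrt d := Real.sqrt_pos.2 (by exact_mod_cast hd)
  nlinarith [Real.rpow_pos_of_pos hvol (1/2 : ℝ), mul_pos (Real.rpow_pos_of_pos hvol (1/2:ℝ)) hd0]

open Matrix in
def SS {d : ℕ} (i0 i1 : Fin d) : Mat d := single i0 i0 1 + single i1 i1 1
open Matrix in
def KK {d : ℕ} (i0 i1 : Fin d) : Mat d := single i1 i0 1 - single i0 i1 1
def AA {d : ℕ} (i0 i1 : Fin d) (t : ℝ) : Mat d :=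
  1 + (Real.cos t - 1) • SS i0 i1 + Real.sin t • KK i0 i1
def AA' {d : ℕ} (i0 i1 : Fin d) (t : ℝ) : Mat d :=
  (-Real.sin t) • SS i0 i1 + Real.cos t • KK i0 i1

section MatAlg
open Matrix
variable {d : ℕ} {i0 i1 : Fin d}

lemma hSS (hne : i0 ≠ i1) : SS i0 i1 * SS i0 i1 = SS i0 i1 := by
  unfold SS
  simp [Matrix.add_mul, Matrix.mul_add, Matrix.single_mul_single_same,
    Matrix.single_mul_single_of_ne, hne, hne.symm]

lemma hSK (hne : i0 ≠ i1) : SS i0 i1 * KK i0 i1 = KK i0 i1 := by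
  unfold SS KK
  simp [Matrix.add_mul, Matrix.mul_add, Matrix.mul_sub, Matrix.sub_mul,
    Matrix.single_mul_single_same,
    Matrix.single_mul_single_of_ne, hne, hne.symm]

lemma hKS (hne : i0 ≠ i1) : KK i0 i1 * SS i0 i1 = KK i0 i1 := by
  unfold SS KK
  simp [Matrix.add_mul, Matrix.mul_add, Matrix.mul_sub, Matrix.sub_mul,
    Matrix.single_mul_single_same,
    Matrix.single_mul_single_of_ne, hne, hne.symm]
  abel

lemma hKK (hne : i0 ≠ i1) : KK i0 i1 * KK i0 i1 = -SS i0 i1 := by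
  unfold SS KK
  simp [Matrix.mul_sub, Matrix.sub_mul, Matrix.single_mul_single_same,
    Matrix.single_mul_single_of_ne, hne, hne.symm]
  abel

lemma hST : (SS i0 i1)ᵀ = SS (d := d) i0 i1 := by
  unfold SS
  ext i j
  simp [Matrix.transpose_apply, Matrix.single, and_comm]

lemma hKT : (KK i0 i1)ᵀ = -KK (d := d) i0 i1 := by
  unfold KK
  ext i j
  simp only [Matrix.transpose_apply, Matrix.sub_apply, Matrix.neg_apply, Matrix.single,
    Matrix.of_apply]
  rw [neg_sub]
  congr 1 <;> simp [and_comm]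

lemma expandAAT (hne : i0 ≠ i1) (a b : ℝ) :
    ((1:Mat d) + a • SS i0 i1 + b • KK i0 i1) *
      ((1:Mat d) + a • SS i0 i1 + b • KK i0 i1)ᵀ
      = 1 + (2*a + a*a + b*b) • SS i0 i1 := by
  have htr : ((1:Mat d) + a • SS i0 i1 + b • KK i0 i1)ᵀ
      = 1 + a • SS i0 i1 + (-b) • KK i0 i1 := by
    rw [Matrix.transpose_add, Matrix.transpose_add, Matrix.transpose_one,
      Matrix.transpose_smul, Matrix.transpose_smul, hST, hKT]
    module
  rw [htr]
  simp only [Matrix.add_mul, Matrix.mul_add, Matrix.mul_one, Matrix.one_mul,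
    Matrix.smul_mul, Matrix.mul_smul, hSS hne, hSK hne, hKS hne, hKK hne,
    smul_smul, smul_neg, smul_add]
  module

lemma hAAT (hne : i0 ≠ i1) (t : ℝ) : AA i0 i1 t * (AA i0 i1 t)ᵀ = 1 := by
  unfold AA
  rw [expandAAT hne]
  have hz : 2*(Real.cos t - 1) + (Real.cos t - 1)*(Real.cos t - 1)
      + Real.sin t * Real.sin t = 0 := by
    have := Real.sin_sq_add_cos_sq t
    nlinarith
  rw [hz, zero_smul, add_zero]
end MatAlg

section MatAlg2
open Matrix
variable {d : ℕ} {i0 i1 : Fin d}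

lemma AA_continuous : Continuous (AA i0 i1) := by
  unfold AA
  apply Continuous.add
  apply Continuous.add continuous_const
  · exact (Real.continuous_cos.sub continuous_const).smul continuous_const
  · exact Real.continuous_sin.smul continuous_const

lemma AA_zero : AA i0 i1 0 = 1 := by
  unfold AA
  simp

lemma AA_det (hne : i0 ≠ i1) (t : ℝ) : (AA i0 i1 t).det = 1 := by
  have hsq : ∀ s : ℝ, (AA i0 i1 s).det ^ 2 = 1 := by
    intro s
    have := congrArg Matrix.det (hAAT hne s)
    rwa [Matrix.det_mul, Matrix.det_transpose, Matrix.det_one, ← sq] at this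
  by_contra hne1
  have hval : (AA i0 i1 t).det = -1 := by
    have h := hsq t
    have : ((AA i0 i1 t).det - 1) * ((AA i0 i1 t).det + 1) = 0 := by nlinarith
    rcases mul_eq_zero.1 this with h' | h'
    · exact absurd (by linarith) hne1
    · linarith
  have hcont : Continuous fun s => (AA i0 i1 s).det :=
    Continuous.matrix_det AA_continuous
  have h0 : (AA i0 i1 0).det = 1 := by rw [AA_zero, Matrix.det_one]
  have : (0:ℝ) ∈ Set.uIcc ((AA i0 i1 0).det) ((AA i0 i1 t).det) := by
    rw [h0, hval]
    rw [Set.uIcc_of_ge (by norm_num)]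
    constructor <;> norm_num
  obtain ⟨s, _, hs⟩ := intermediate_value_uIcc (f := fun s => (AA i0 i1 s).det)
    (hcont.continuousOn) this
  have h2 := hsq s
  simp only at hs
  rw [hs] at h2
  norm_num at h2

lemma AA_mem_SO (hne : i0 ≠ i1) (t : ℝ) : AA i0 i1 t ∈ SO d :=
  ⟨hAAT hne t, AA_det hne t⟩

lemma AA_apply (t : ℝ) (i l : Fin d) :
    AA i0 i1 t i l = (1:Mat d) i l + (Real.cos t - 1) * SS i0 i1 i l
      + Real.sin t * KK i0 i1 i l := by
  unfold AA
  simp [Matrix.add_apply, Matrix.smul_apply, smul_eq_mul]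

lemma AA'_apply (t : ℝ) (i l : Fin d) :
    AA' i0 i1 t i l = -Real.sin t * SS i0 i1 i l + Real.cos t * KK i0 i1 i l := by
  unfold AA'
  simp [Matrix.add_apply, Matrix.smul_apply, smul_eq_mul]

lemma AA_hasDerivAt (t : ℝ) (i l : Fin d) :
    HasDerivAt (fun s => AA i0 i1 s i l) (AA' i0 i1 t i l) t := by
  simp only [AA_apply, AA'_apply]
  have h1 : HasDerivAt (fun s => (1:Mat d) i l) 0 t := hasDerivAt_const _ _
  have h2 : HasDerivAt (fun s => (Real.cos s - 1) * SS i0 i1 i l)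
      (-Real.sin t * SS i0 i1 i l) t :=
    ((Real.hasDerivAt_cos t).sub_const 1).mul_const _
  have h3 : HasDerivAt (fun s => Real.sin s * KK i0 i1 i l)
      (Real.cos t * KK i0 i1 i l) t := (Real.hasDerivAt_sin t).mul_const _
  have := (h1.add h2).add h3
  simp only [zero_add] at this
  exact this

lemma SS_abs_le (i l : Fin d) : |SS i0 i1 i l| ≤ 2 := by
  unfold SS
  simp only [Matrix.add_apply, Matrix.single, Matrix.of_apply]
  split <;> split <;> norm_num

lemma KK_abs_le (i l : Fin d) : |KK i0 i1 i l| ≤ 2 := by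
  unfold KK
  simp only [Matrix.sub_apply, Matrix.single, Matrix.of_apply]
  split <;> split <;> norm_num

lemma AA_abs_le (t : ℝ) (i l : Fin d) : |AA i0 i1 t i l| ≤ 7 := by
  rw [AA_apply]
  have h1 : |(1:Mat d) i l| ≤ 1 := by
    rw [Matrix.one_apply]; split <;> norm_num
  have h2 : |Real.cos t - 1| ≤ 2 := by
    have := Real.neg_one_le_cos t; have := Real.cos_le_one t
    rw [abs_le]; constructor <;> linarith
  have h3 := Real.abs_sin_le_one t
  calc |(1:Mat d) i l + (Real.cos t - 1) * SS i0 i1 i l + Real.sin t * KK i0 i1 i l|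
      ≤ |(1:Mat d) i l| + |(Real.cos t - 1) * SS i0 i1 i l| + |Real.sin t * KK i0 i1 i l| := by
        exact (abs_add_le _ _).trans (by gcongr; exact abs_add_le _ _)
    _ ≤ 1 + 2 * 2 + 1 * 2 := by
        gcongr
        · rw [abs_mul]
          exact mul_le_mul h2 (SS_abs_le i l) (abs_nonneg _) (by norm_num)
        · rw [abs_mul]
          exact mul_le_mul h3 (KK_abs_le i l) (abs_nonneg _) (by norm_num)
    _ ≤ 7 := by norm_num

lemma AA'_abs_le (t : ℝ) (i l : Fin d) : |AA' i0 i1 t i l| ≤ 4 := by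
  rw [AA'_apply]
  have h3 := Real.abs_sin_le_one t
  have h4 := Real.abs_cos_le_one t
  calc |(-Real.sin t) * SS i0 i1 i l + Real.cos t * KK i0 i1 i l|
      ≤ |(-Real.sin t) * SS i0 i1 i l| + |Real.cos t * KK i0 i1 i l| := abs_add_le _ _
    _ ≤ 1 * 2 + 1 * 2 := by
        gcongr
        · rw [abs_mul]
          exact mul_le_mul (by simpa using h3) (SS_abs_le i l) (abs_nonneg _) (by norm_num)
        · rw [abs_mul]
          exact mul_le_mul h4 (KK_abs_le i l) (abs_nonneg _) (by norm_num)
    _ ≤ 4 := by norm_num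
end MatAlg2

section IBP
variable {d : ℕ}

lemma pd_eq_zero_of_not_mem {φ : E d → ℝ} {x : E d} (k : Fin d)
    (hx : x ∉ tsupport φ) : pd φ k x = 0 := by
  unfold pd
  have : fderiv ℝ φ x = fderiv ℝ (fun _ => (0:ℝ)) x :=
    Filter.EventuallyEq.fderiv_eq (notMem_tsupport_iff_eventuallyEq.1 hx)
  rw [this, fderiv_const_apply]
  simp

lemma aux_ibp (k i0 : Fin d) (g g' : ℝ → ℝ) (hderiv : ∀ t, HasDerivAt g (g' t) t)
    (hgc : Continuous g) (hg'c : Continuous g')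
    (φ : E d → ℝ) (hφ : ContDiff ℝ (⊤ : ℕ∞) φ) (hφs : HasCompactSupport φ) :
    ∫ x : E d, g (x i0) * pd φ k x
      = - ∫ x : E d, (if i0 = k then g' (x i0) else 0) * φ x := by
  classical
  set L : E d →L[ℝ] ℝ := EuclideanSpace.proj i0 with hL
  set v : E d := EuclideanSpace.single k 1 with hv
  have hLx : ∀ x : E d, L x = x i0 := fun x => rfl
  have hLv : L v = if i0 = k then (1:ℝ) else 0 := by
    rw [hLx, hv, EuclideanSpace.single_apply]
  have hfd : ∀ x : E d, HasFDerivAt (fun y : E d => g (y i0)) (g' (x i0) • L) x := by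
    intro x
    have := (hderiv (L x)).comp_hasFDerivAt x L.hasFDerivAt
    simpa [Function.comp_def, hLx] using this
  have hdiff : Differentiable ℝ (fun y : E d => g (y i0)) := fun x => (hfd x).differentiableAt
  have hfderiv : ∀ x : E d, fderiv ℝ (fun y : E d => g (y i0)) x v
      = (if i0 = k then g' (x i0) else 0) := by
    intro x
    rw [(hfd x).fderiv]
    simp only [ContinuousLinearMap.smul_apply, hLv, smul_eq_mul, mul_ite, mul_one, mul_zero]
  have hφd : Differentiable ℝ φ := hφ.differentiable (by simp)
  have hpdc : Continuous fun x : E d => fderiv ℝ φ x v :=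
    (hφ.continuous_fderiv_apply (by simp)).comp (continuous_id.prodMk continuous_const)
  have hgc' : Continuous fun x : E d => g (x i0) := hgc.comp (PiLp.continuous_apply (p := 2) (β := fun _ : Fin d => ℝ) i0)
  have hg'c' : Continuous fun x : E d => g' (x i0) := hg'c.comp (PiLp.continuous_apply (p := 2) (β := fun _ : Fin d => ℝ) i0)
  have hifc : Continuous fun x : E d => (if i0 = k then g' (x i0) else 0) := by
    by_cases hik : i0 = k
    · simpa [hik] using hg'c'
    · simp [hik]; exact continuous_const
  have hint1 : Integrable (fun x : E d => fderiv ℝ (fun y : E d => g (y i0)) x v * φ x) := by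
    have : (fun x : E d => fderiv ℝ (fun y : E d => g (y i0)) x v * φ x)
        = fun x => (if i0 = k then g' (x i0) else 0) * φ x := by
      funext x; rw [hfderiv x]
    rw [this]
    exact (hifc.mul hφ.continuous).integrable_of_hasCompactSupport hφs.mul_left
  have hint2 : Integrable (fun x : E d => g (x i0) * fderiv ℝ φ x v) := by
    apply (hgc'.mul hpdc).integrable_of_hasCompactSupport
    have hfds : HasCompactSupport fun x : E d => fderiv ℝ φ x v := by
      apply HasCompactSupport.comp_left (g := fun T : E d →L[ℝ] ℝ => T v) (hφs.fderiv ℝ)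
      simp
    exact hfds.mul_left
  have hint3 : Integrable (fun x : E d => g (x i0) * φ x) :=
    (hgc'.mul hφ.continuous).integrable_of_hasCompactSupport hφs.mul_left
  have key := integral_mul_fderiv_eq_neg_fderiv_mul_of_integrable hint1 hint2 hint3 (fun x _ => hdiff x) (fun x _ => hφd x)
  have lhs_eq : ∫ x : E d, g (x i0) * pd φ k x = ∫ x : E d, g (x i0) * fderiv ℝ φ x v := rfl
  rw [lhs_eq, key]
  congr 1
  apply integral_congr_ae (Filter.Eventually.of_forall fun x => ?_)
  show fderiv ℝ (fun y : E d => g (y i0)) x v * φ x = (if i0 = k then g' (x i0) else 0) * φ x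
  rw [hfderiv x]
end IBP

section Null
variable {d : ℕ}

lemma aux_hyperplane_null (i0 : Fin d) (c : ℝ) :
    volume {x : E d | x i0 = c} = 0 := by
  classical
  set L : E d →L[ℝ] ℝ := EuclideanSpace.proj i0 with hLdef
  set s : AffineSubspace ℝ (E d) :=
    AffineSubspace.mk' (EuclideanSpace.single i0 c) (LinearMap.ker (L : E d →ₗ[ℝ] ℝ)) with hs
  have hset : {x : E d | x i0 = c} = (s : Set (E d)) := by
    ext x
    simp only [Set.mem_setOf_eq, hs, SetLike.mem_coe]
    rw [AffineSubspace.mem_mk']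
    have : (x -ᵥ EuclideanSpace.single i0 c) ∈ LinearMap.ker (L : E d →ₗ[ℝ] ℝ)
        ↔ x i0 - c = 0 := by
      rw [LinearMap.mem_ker, ContinuousLinearMap.coe_coe]
      have : L (x -ᵥ EuclideanSpace.single i0 c) = x i0 - c := by
        have := map_sub L x (EuclideanSpace.single i0 c)
        simp only [vsub_eq_sub]
        rw [this]
        simp [hLdef, EuclideanSpace.single_apply]
      rw [this]
    rw [this]
    constructor
    · intro h; rw [h]; ring
    · intro h; linarith
  rw [hset]
  apply Measure.addHaar_affineSubspace
  intro htop
  have h1 : EuclideanSpace.single i0 (c+1) ∈ s := by rw [htop]; trivial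
  rw [hs, AffineSubspace.mem_mk', LinearMap.mem_ker, ContinuousLinearMap.coe_coe] at h1
  have : L (EuclideanSpace.single i0 (c+1) -ᵥ EuclideanSpace.single i0 c) = 1 := by
    simp only [vsub_eq_sub]
    rw [map_sub]
    simp [hLdef, EuclideanSpace.single_apply]
  rw [h1] at this
  norm_num at this

lemma aux_cos_null (i0 : Fin d) : volume {x : E d | Real.cos (x i0) = 0} = 0 := by
  have hset : {x : E d | Real.cos (x i0) = 0}
      = ⋃ k : ℤ, {x : E d | x i0 = (2 * k + 1) * Real.pi / 2} := by
    ext x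
    simp only [Set.mem_setOf_eq, Set.mem_iUnion, Real.cos_eq_zero_iff]
  rw [hset]
  exact measure_iUnion_null fun k => aux_hyperplane_null i0 _
end Null

section C2
variable {d : ℕ}

lemma AA_entry_continuous (i0 i1 : Fin d) (i l : Fin d) :
    Continuous fun s => AA i0 i1 s i l := by
  simp only [AA_apply]
  apply Continuous.add
  apply Continuous.add continuous_const
  · exact (Real.continuous_cos.sub continuous_const).mul continuous_const
  · exact Real.continuous_sin.mul continuous_const

lemma AA'_entry_continuous (i0 i1 : Fin d) (i l : Fin d) :
    Continuous fun s => AA' i0 i1 s i l := by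
  simp only [AA'_apply]
  apply Continuous.add
  · exact (Real.continuous_sin.neg).mul continuous_const
  · exact Real.continuous_cos.mul continuous_const

lemma aux_C2_nonneg {p : ℝ} (hd : 2 ≤ d) (hp1 : 1 ≤ p) (x₀ : E d) (ρ : ℝ) (hρ : 0 < ρ)
    (c1 c2 : ℝ)
    (h : ∀ (V : E d → Mat d) (W : Fin d → Fin d → Fin d → E d → ℝ),
        MemLp (fun x => fnorm (V x)) 2 (volume.restrict (Metric.ball x₀ ρ)) →
        HasWeakCurl (Metric.ball x₀ ρ) V W →
        (∀ i k l : Fin d, MemLp (W i k l) (ENNReal.ofReal p)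
          (volume.restrict (Metric.ball x₀ ρ))) →
        ∃ R ∈ SO d, L2norm (Metric.ball x₀ ρ) (fun x => fnorm (V x - R)) ≤
          c1 * L2norm (Metric.ball x₀ ρ) (fun x => distSO (V x)) +
            c2 * LpCurlNorm (Metric.ball x₀ ρ) W p) :
    0 ≤ c2 := by
  classical
  haveI : IsFiniteMeasure (volume.restrict (Metric.ball x₀ ρ)) := ball_finiteMeasure x₀ ρ
  have hp0 : (0:ℝ) < p := lt_of_lt_of_le one_pos hp1
  set i0 : Fin d := ⟨0, by omega⟩ with hi0
  set i1 : Fin d := ⟨1, by omega⟩ with hi1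
  have hne : i0 ≠ i1 := by simp [hi0, hi1, Fin.ext_iff]
  set B := Metric.ball x₀ ρ with hB
  set V : E d → Mat d := fun x => AA i0 i1 (x i0) with hV
  set W : Fin d → Fin d → Fin d → E d → ℝ := fun i k l x =>
    (if i0 = k then AA' i0 i1 (x i0) i l else 0)
      - (if i0 = l then AA' i0 i1 (x i0) i k else 0) with hW
  -- MemLp for V
  have hVcont : ∀ i l : Fin d, Continuous fun x : E d => V x i l := fun i l =>
    (AA_entry_continuous i0 i1 i l).comp (PiLp.continuous_apply (p := 2) (β := fun _ : Fin d => ℝ) i0)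
  have memV : MemLp (fun x => fnorm (V x)) 2 (volume.restrict B) := by
    apply MemLp.of_bound (C := Real.sqrt (d * d * 49))
    · apply Continuous.aestronglyMeasurable
      apply Real.continuous_sqrt.comp
      apply continuous_finset_sum
      intro i _
      apply continuous_finset_sum
      intro j _
      exact (hVcont i j).pow 2
    · apply Filter.Eventually.of_forall
      intro x
      rw [Real.norm_eq_abs, abs_of_nonneg (fnorm_nonneg' _)]
      unfold fnorm
      apply Real.sqrt_le_sqrt
      calc ∑ i, ∑ j, (V x i j)^2 ≤ ∑ i : Fin d, ∑ j : Fin d, (49:ℝ) := by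
            apply Finset.sum_le_sum; intro i _
            apply Finset.sum_le_sum; intro j _
            have := AA_abs_le (i0 := i0) (i1 := i1) (x i0) i j
            calc (V x i j)^2 = |V x i j|^2 := (sq_abs _).symm
              _ ≤ 7^2 := by apply pow_le_pow_left₀ (abs_nonneg _) this
              _ ≤ 49 := by norm_num
        _ = d * d * 49 := by simp [Finset.sum_const]; ring
  -- weak curl
  have curl : HasWeakCurl B V W := by
    intro i k l φ ⟨hφ1, hφ2, hφ3⟩
    have hsupp : tsupport φ ⊆ B := hφ3.trans interior_subset
    have hpd0 : ∀ x ∉ B, ∀ k', pd φ k' x = 0 := fun x hx k' =>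
      pd_eq_zero_of_not_mem k' (fun hmem => hx (hsupp hmem))
    have hphi0 : ∀ x ∉ B, φ x = 0 := fun x hx =>
      image_eq_zero_of_notMem_tsupport (fun hmem => hx (hsupp hmem))
    have lhs_eq : (∫ x in B, (V x i l * pd φ k x - V x i k * pd φ l x))
        = ∫ x : E d, (V x i l * pd φ k x - V x i k * pd φ l x) := by
      apply setIntegral_eq_integral_of_forall_compl_eq_zero
      intro x hx
      rw [hpd0 x hx k, hpd0 x hx l]
      ring
    have rhs_eq : (∫ x in B, W i k l x * φ x) = ∫ x : E d, W i k l x * φ x := by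
      apply setIntegral_eq_integral_of_forall_compl_eq_zero
      intro x hx
      rw [hphi0 x hx]
      ring
    rw [lhs_eq, rhs_eq]
    -- integrability of pieces
    have hWc : ∀ i' l', Continuous fun x : E d => AA' i0 i1 (x i0) i' l' := fun i' l' =>
      (AA'_entry_continuous i0 i1 i' l').comp (PiLp.continuous_apply (p := 2) (β := fun _ : Fin d => ℝ) i0)
    have hpdc : ∀ k' : Fin d, Continuous fun x : E d => pd φ k' x := by
      intro k'
      exact (hφ1.continuous_fderiv_apply (by simp)).comp
        (continuous_id.prodMk continuous_const)
    have int1 : Integrable (fun x : E d => V x i l * pd φ k x) := by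
      apply ((hVcont i l).mul (hpdc k)).integrable_of_hasCompactSupport
      have : HasCompactSupport fun x : E d => pd φ k x := by
        apply HasCompactSupport.comp_left (g := fun T : E d →L[ℝ] ℝ =>
          T (EuclideanSpace.single k 1)) (hφ2.fderiv ℝ)
        simp
      exact this.mul_left
    have int2 : Integrable (fun x : E d => V x i k * pd φ l x) := by
      apply ((hVcont i k).mul (hpdc l)).integrable_of_hasCompactSupport
      have : HasCompactSupport fun x : E d => pd φ l x := by
        apply HasCompactSupport.comp_left (g := fun T : E d →L[ℝ] ℝ =>
          T (EuclideanSpace.single l 1)) (hφ2.fderiv ℝ)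
        simp
      exact this.mul_left
    rw [integral_sub int1 int2]
    have ibp1 := aux_ibp k i0 (fun t => AA i0 i1 t i l) (fun t => AA' i0 i1 t i l)
      (fun t => AA_hasDerivAt t i l) (AA_entry_continuous i0 i1 i l)
      (AA'_entry_continuous i0 i1 i l) φ hφ1 hφ2
    have ibp2 := aux_ibp l i0 (fun t => AA i0 i1 t i k) (fun t => AA' i0 i1 t i k)
      (fun t => AA_hasDerivAt t i k) (AA_entry_continuous i0 i1 i k)
      (AA'_entry_continuous i0 i1 i k) φ hφ1 hφ2
    rw [ibp1, ibp2]
    have intW1 : Integrable (fun x : E d => (if i0 = k then AA' i0 i1 (x i0) i l else 0) * φ x) := by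
      apply Continuous.integrable_of_hasCompactSupport _ hφ2.mul_left
      apply Continuous.mul _ hφ1.continuous
      by_cases hik : i0 = k
      · simpa [hik] using hWc i l
      · simpa [hik] using continuous_const
    have intW2 : Integrable (fun x : E d => (if i0 = l then AA' i0 i1 (x i0) i k else 0) * φ x) := by
      apply Continuous.integrable_of_hasCompactSupport _ hφ2.mul_left
      apply Continuous.mul _ hφ1.continuous
      by_cases hik : i0 = l
      · simpa [hik] using hWc i k
      · simpa [hik] using continuous_const
    have rhsW : ∫ x : E d, W i k l x * φ x
        = (∫ x : E d, (if i0 = k then AA' i0 i1 (x i0) i l else 0) * φ x)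
          - ∫ x : E d, (if i0 = l then AA' i0 i1 (x i0) i k else 0) * φ x := by
      rw [← integral_sub intW1 intW2]
      apply integral_congr_ae (Filter.Eventually.of_forall fun x => ?_)
      show W i k l x * φ x = (if i0 = k then AA' i0 i1 (x i0) i l else 0) * φ x
        - (if i0 = l then AA' i0 i1 (x i0) i k else 0) * φ x
      rw [hW]
      ring
    rw [rhsW]
    ring
  -- MemLp for W
  have memW : ∀ i k l : Fin d, MemLp (W i k l) (ENNReal.ofReal p) (volume.restrict B) := by
    intro i k l
    apply MemLp.of_bound (C := 8)
    · apply Continuous.aestronglyMeasurable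
      apply Continuous.sub
      · by_cases hik : i0 = k
        · simpa [hik, Function.comp_def] using (AA'_entry_continuous i0 i1 i l).comp (PiLp.continuous_apply (p := 2) (β := fun _ : Fin d => ℝ) i0)
        · simpa [hik] using continuous_const
      · by_cases hil : i0 = l
        · simpa [hil, Function.comp_def] using (AA'_entry_continuous i0 i1 i k).comp (PiLp.continuous_apply (p := 2) (β := fun _ : Fin d => ℝ) i0)
        · simpa [hil] using continuous_const
    · apply Filter.Eventually.of_forall
      intro x
      rw [hW, Real.norm_eq_abs]
      have b1 : |(if i0 = k then AA' i0 i1 (x i0) i l else 0)| ≤ 4 := by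
        split
        · exact AA'_abs_le _ _ _
        · norm_num
      have b2 : |(if i0 = l then AA' i0 i1 (x i0) i k else 0)| ≤ 4 := by
        split
        · exact AA'_abs_le _ _ _
        · norm_num
      calc |(if i0 = k then AA' i0 i1 (x i0) i l else 0)
          - (if i0 = l then AA' i0 i1 (x i0) i k else 0)|
          ≤ |(if i0 = k then AA' i0 i1 (x i0) i l else 0)|
            + |(if i0 = l then AA' i0 i1 (x i0) i k else 0)| := abs_sub _ _
        _ ≤ 8 := by linarith
  obtain ⟨R, hR, hineq⟩ := h V W memV curl memW
  -- distSO (V x) = 0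
  have hdist : (fun x : E d => distSO (V x)) = fun _ => (0:ℝ) := by
    funext x
    exact distSO_eq_zero_of_mem (AA_mem_SO hne (x i0))
  have hL2dist : L2norm B (fun x => distSO (V x)) = 0 := by
    rw [hdist]
    unfold L2norm
    norm_num
  -- LpCurlNorm positive
  have hW0011 : ∀ x : E d, W i0 i0 i1 x = -Real.cos (x i0) := by
    intro x
    rw [hW]
    simp only [if_pos rfl, if_neg hne]
    rw [AA'_apply]
    have hS : SS i0 i1 i0 i1 = 0 := by
      unfold SS
      simp [Matrix.single, hne, hne.symm]
    have hK : KK i0 i1 i0 i1 = -1 := by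
      unfold KK
      simp [Matrix.single, hne, hne.symm]
    rw [hS, hK]
    simp
  have hcosint : IntegrableOn (fun x : E d => |Real.cos (x i0)| ^ p) B volume := by
    have hc : Continuous fun x : E d => |Real.cos (x i0)| ^ p := by
      apply Continuous.rpow_const
      · exact (Real.continuous_cos.comp (PiLp.continuous_apply (p := 2) (β := fun _ : Fin d => ℝ) i0)).abs
      · intro x; exact Or.inr hp0.le
    apply Integrable.mono' (integrable_const (1:ℝ)) hc.aestronglyMeasurable
    apply Filter.Eventually.of_forall
    intro x
    rw [Real.norm_eq_abs, abs_of_nonneg (Real.rpow_nonneg (abs_nonneg _) _)]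
    exact Real.rpow_le_one (abs_nonneg _) (Real.abs_cos_le_one _) hp0.le
  have hT : 0 < ∫ x in B, |Real.cos (x i0)| ^ p := by
    rw [setIntegral_pos_iff_support_of_nonneg_ae
      (Filter.Eventually.of_forall fun x => Real.rpow_nonneg (abs_nonneg _) _) hcosint]
    have hsub : B \ {x : E d | Real.cos (x i0) = 0}
        ⊆ (Function.support fun x : E d => |Real.cos (x i0)| ^ p) ∩ B := by
      rintro x ⟨hxB, hxc⟩
      refine ⟨?_, hxB⟩
      simp only [Function.mem_support]
      have : 0 < |Real.cos (x i0)| := abs_pos.2 hxc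
      exact (Real.rpow_pos_of_pos this p).ne'
    calc (0:ENNReal) < volume B := Metric.measure_ball_pos volume x₀ hρ
      _ = volume (B \ {x : E d | Real.cos (x i0) = 0}) :=
          (measure_diff_null (aux_cos_null i0)).symm
      _ ≤ volume ((Function.support fun x : E d => |Real.cos (x i0)| ^ p) ∩ B) :=
          measure_mono hsub
  have hLpW : 0 < LpCurlNorm B W p := by
    unfold LpCurlNorm
    apply Real.rpow_pos_of_pos
    have term_nonneg : ∀ (i k l : Fin d),
        0 ≤ (if k < l then ∫ x in B, |W i k l x| ^ p else 0) := by
      intro i k l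
      split
      · exact integral_nonneg fun x => Real.rpow_nonneg (abs_nonneg _) _
      · exact le_rfl
    have hterm : (if i0 < i1 then ∫ x in B, |W i0 i0 i1 x| ^ p else 0)
        = ∫ x in B, |Real.cos (x i0)| ^ p := by
      rw [if_pos (by simp [hi0, hi1, Fin.lt_def])]
      apply integral_congr_ae (Filter.Eventually.of_forall fun x => ?_)
      rw [hW0011 x, abs_neg]
    calc (0:ℝ) < ∫ x in B, |Real.cos (x i0)| ^ p := hT
      _ = (if i0 < i1 then ∫ x in B, |W i0 i0 i1 x| ^ p else 0) := hterm.symm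
      _ ≤ ∑ k : Fin d, ∑ l : Fin d, (if k < l then ∫ x in B, |W i0 k l x| ^ p else 0) := by
          apply Finset.single_le_sum (f := fun k : Fin d =>
            ∑ l : Fin d, (if k < l then ∫ x in B, |W i0 k l x| ^ p else 0))
            (fun k _ => Finset.sum_nonneg fun l _ => term_nonneg i0 k l)
            (Finset.mem_univ i0) |>.trans' ?_
          exact Finset.single_le_sum (fun l _ => term_nonneg i0 i0 l) (Finset.mem_univ i1)
      _ ≤ ∑ i : Fin d, ∑ k : Fin d, ∑ l : Fin d,
            (if k < l then ∫ x in B, |W i k l x| ^ p else 0) := by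
          apply Finset.single_le_sum (f := fun i : Fin d => ∑ k : Fin d, ∑ l : Fin d,
            (if k < l then ∫ x in B, |W i k l x| ^ p else 0))
            (fun i _ => Finset.sum_nonneg fun k _ =>
              Finset.sum_nonneg fun l _ => term_nonneg i k l) (Finset.mem_univ i0)
  rw [hL2dist, mul_zero, zero_add] at hineq
  have hL2nn : 0 ≤ L2norm B fun x => fnorm (V x - R) := L2norm_nonneg _ _
  nlinarith
end C2

section Main
variable {d : ℕ}

lemma aux_main {n : ℕ} (hd : 2 ≤ d) {p : ℝ} (hp1 : 1 ≤ p)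
    (v : Fin d → E d) (M : Set (E d)) (x₀ : E d) (ρ : ℝ) (hρ : 0 < ρ)
    (hMB : M ⊆ Metric.ball x₀ ρ) (t : Fin n → Fin d → ℤ)
    (hcov : Metric.ball x₀ ρ ⊆ ⋃ j : Fin n, (fun x => x + ∑ i, (t j i : ℝ) • v i) '' M)
    (c1 c2 : ℝ)
    (hrig : ∀ (V : E d → Mat d) (W : Fin d → Fin d → Fin d → E d → ℝ),
        MemLp (fun x => fnorm (V x)) 2 (volume.restrict (Metric.ball x₀ ρ)) →
        HasWeakCurl (Metric.ball x₀ ρ) V W →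
        (∀ i k l : Fin d, MemLp (W i k l) (ENNReal.ofReal p)
          (volume.restrict (Metric.ball x₀ ρ))) →
        ∃ R ∈ SO d, L2norm (Metric.ball x₀ ρ) (fun x => fnorm (V x - R)) ≤
          c1 * L2norm (Metric.ball x₀ ρ) (fun x => distSO (V x)) +
            c2 * LpCurlNorm (Metric.ball x₀ ρ) W p)
    (V : E d → Mat d) (W : Fin d → Fin d → Fin d → E d → ℝ)
    (hVper : LatticePeriodic v V) (hWper : ∀ i k l, LatticePeriodic v (W i k l))
    (memV : MemLp (fun x => fnorm (V x)) 2 (volume.restrict M))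
    (curlU : HasWeakCurl Set.univ V W)
    (memW : ∀ i k l : Fin d, MemLp (W i k l) (ENNReal.ofReal p) (volume.restrict M)) :
    ∃ R ∈ SO d, L2norm M (fun x => fnorm (V x - R)) ≤
      Real.sqrt n * c1 * L2norm M (fun x => distSO (V x)) +
        (n : ℝ) ^ (1 / p) * c2 * LpCurlNorm M W p := by
  classical
  have hp0 : (0:ℝ) < p := lt_of_lt_of_le one_pos hp1
  set B := Metric.ball x₀ ρ with hB
  set c : Fin n → E d := fun j => ∑ i, (t j i : ℝ) • v i with hc
  have hcov' : B ⊆ ⋃ j, (fun x => x + c j) '' M := hcov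
  -- transfer MemLp
  have memVB : MemLp (fun x => fnorm (V x)) 2 (volume.restrict B) :=
    aux_memLp_cover c M B hcov' 2 (by norm_num) (by norm_num) _
      (fun j x => by rw [hVper (t j) x]) memV
  have memWB : ∀ i k l : Fin d, MemLp (W i k l) (ENNReal.ofReal p) (volume.restrict B) :=
    fun i k l => aux_memLp_cover c M B hcov' _
      (by simp [ENNReal.ofReal_eq_zero]; linarith) ENNReal.ofReal_ne_top _
      (fun j x => hWper i k l (t j) x) (memW i k l)
  -- transfer HasWeakCurl
  have curlB : HasWeakCurl B V W := by
    intro i k l φ ⟨h1, h2, h3⟩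
    have hsupp : tsupport φ ⊆ B := h3.trans interior_subset
    have huniv := curlU i k l φ ⟨h1, h2, by simp⟩
    rw [Measure.restrict_univ] at huniv
    have lhs_eq : (∫ x in B, (V x i l * pd φ k x - V x i k * pd φ l x))
        = ∫ x : E d, (V x i l * pd φ k x - V x i k * pd φ l x) := by
      apply setIntegral_eq_integral_of_forall_compl_eq_zero
      intro x hx
      have hx' : x ∉ tsupport φ := fun hm => hx (hsupp hm)
      rw [pd_eq_zero_of_not_mem k hx', pd_eq_zero_of_not_mem l hx']
      ring
    have rhs_eq : (∫ x in B, W i k l x * φ x) = ∫ x : E d, W i k l x * φ x := by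
      apply setIntegral_eq_integral_of_forall_compl_eq_zero
      intro x hx
      rw [image_eq_zero_of_notMem_tsupport (fun hm => hx (hsupp hm))]
      ring
    rw [lhs_eq, rhs_eq, huniv]
  obtain ⟨R, hR, hineq⟩ := hrig V W memVB curlB memWB
  refine ⟨R, hR, ?_⟩
  -- constants are nonnegative
  have hc1 : 0 ≤ c1 := aux_C1_nonneg (by omega) x₀ ρ hρ hp0.ne' c1 c2 hrig
  have hc2 : 0 ≤ c2 := aux_C2_nonneg hd hp1 x₀ ρ hρ c1 c2 hrig
  -- step 1 : L2 over M bounded by L2 over B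
  have step1 : L2norm M (fun x => fnorm (V x - R)) ≤ L2norm B (fun x => fnorm (V x - R)) := by
    unfold L2norm
    apply Real.rpow_le_rpow (integral_nonneg fun x => sq_nonneg _) _ (by norm_num)
    apply aux_integral_mono_MB c M B hMB hcov' _ (fun x => sq_nonneg _)
    intro j x
    have : V (x + c j) = V x := hVper (t j) x
    rw [this]
  -- step 2 : dist term
  have step2 : L2norm B (fun x => distSO (V x))
      ≤ Real.sqrt n * L2norm M (fun x => distSO (V x)) := by
    unfold L2norm
    have key : ∫ x in B, (distSO (V x))^2 ≤ (n:ℝ) * ∫ x in M, (distSO (V x))^2 := by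
      apply aux_integral_cover c M B hMB hcov' _ (fun x => sq_nonneg _)
      intro j x
      rw [hVper (t j) x]
    calc (∫ x in B, (distSO (V x))^2) ^ (1/2 : ℝ)
        ≤ ((n:ℝ) * ∫ x in M, (distSO (V x))^2) ^ (1/2 : ℝ) :=
          Real.rpow_le_rpow (integral_nonneg fun x => sq_nonneg _) key (by norm_num)
      _ = Real.sqrt n * (∫ x in M, (distSO (V x))^2) ^ (1/2 : ℝ) := by
          rw [Real.mul_rpow (Nat.cast_nonneg n) (integral_nonneg fun x => sq_nonneg _)]
          rw [Real.sqrt_eq_rpow]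
  -- step 3 : curl term
  have step3 : LpCurlNorm B W p ≤ (n:ℝ) ^ (1/p) * LpCurlNorm M W p := by
    unfold LpCurlNorm
    have hterm : ∀ i k l : Fin d,
        (if k < l then ∫ x in B, |W i k l x| ^ p else 0)
          ≤ (n:ℝ) * (if k < l then ∫ x in M, |W i k l x| ^ p else 0) := by
      intro i k l
      split
      · apply aux_integral_cover c M B hMB hcov' _
          (fun x => Real.rpow_nonneg (abs_nonneg _) _)
        intro j x
        rw [hWper i k l (t j) x]
      · simp
    have hsum : (∑ i : Fin d, ∑ k : Fin d, ∑ l : Fin d,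
        if k < l then ∫ x in B, |W i k l x| ^ p else 0)
        ≤ (n:ℝ) * ∑ i : Fin d, ∑ k : Fin d, ∑ l : Fin d,
            (if k < l then ∫ x in M, |W i k l x| ^ p else 0) := by
      rw [Finset.mul_sum]
      apply Finset.sum_le_sum; intro i _
      rw [Finset.mul_sum]
      apply Finset.sum_le_sum; intro k _
      rw [Finset.mul_sum]
      apply Finset.sum_le_sum; intro l _
      exact hterm i k l
    have hnn : (0:ℝ) ≤ ∑ i : Fin d, ∑ k : Fin d, ∑ l : Fin d,
        (if k < l then ∫ x in B, |W i k l x| ^ p else 0) := by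
      apply Finset.sum_nonneg; intro i _
      apply Finset.sum_nonneg; intro k _
      apply Finset.sum_nonneg; intro l _
      split
      · exact integral_nonneg fun x => Real.rpow_nonneg (abs_nonneg _) _
      · exact le_rfl
    have hnnM : (0:ℝ) ≤ ∑ i : Fin d, ∑ k : Fin d, ∑ l : Fin d,
        (if k < l then ∫ x in M, |W i k l x| ^ p else 0) := by
      apply Finset.sum_nonneg; intro i _
      apply Finset.sum_nonneg; intro k _
      apply Finset.sum_nonneg; intro l _
      split
      · exact integral_nonneg fun x => Real.rpow_nonneg (abs_nonneg _) _
      · exact le_rfl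
    calc (∑ i : Fin d, ∑ k : Fin d, ∑ l : Fin d,
        if k < l then ∫ x in B, |W i k l x| ^ p else 0) ^ (1/p)
        ≤ ((n:ℝ) * ∑ i : Fin d, ∑ k : Fin d, ∑ l : Fin d,
            (if k < l then ∫ x in M, |W i k l x| ^ p else 0)) ^ (1/p) :=
          Real.rpow_le_rpow hnn hsum (by positivity)
      _ = (n:ℝ) ^ (1/p) * (∑ i : Fin d, ∑ k : Fin d, ∑ l : Fin d,
            (if k < l then ∫ x in M, |W i k l x| ^ p else 0)) ^ (1/p) :=
          Real.mul_rpow (Nat.cast_nonneg n) hnnM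
  calc L2norm M (fun x => fnorm (V x - R)) ≤ L2norm B (fun x => fnorm (V x - R)) := step1
    _ ≤ c1 * L2norm B (fun x => distSO (V x)) + c2 * LpCurlNorm B W p := hineq
    _ ≤ c1 * (Real.sqrt n * L2norm M (fun x => distSO (V x)))
        + c2 * ((n:ℝ) ^ (1/p) * LpCurlNorm M W p) := by
        apply add_le_add
        · exact mul_le_mul_of_nonneg_left step2 hc1
        · exact mul_le_mul_of_nonneg_left step3 hc2
    _ = Real.sqrt n * c1 * L2norm M (fun x => distSO (V x))
        + (n : ℝ) ^ (1 / p) * c2 * LpCurlNorm M W p := by ring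
end Main

section Cover
variable {d : ℕ}

lemma aux_M_subset (v : Fin d → E d) (M : Set (E d))
    (hM : M = {x : E d | ∃ lam : Fin d → ℝ,
      (∀ i, lam i ∈ Set.Ico (0 : ℝ) 1) ∧ x = ∑ i, lam i • v i}) :
    M ⊆ Metric.ball (0 : E d) ((∑ i, ‖v i‖) + 1) := by
  intro x hx
  rw [hM] at hx
  obtain ⟨lam, hlam, rfl⟩ := hx
  rw [mem_ball_zero_iff]
  calc ‖∑ i, lam i • v i‖ ≤ ∑ i, ‖lam i • v i‖ := norm_sum_le _ _
    _ ≤ ∑ i, ‖v i‖ := by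
        apply Finset.sum_le_sum
        intro i _
        rw [norm_smul, Real.norm_eq_abs]
        calc |lam i| * ‖v i‖ ≤ 1 * ‖v i‖ := by
              apply mul_le_mul_of_nonneg_right _ (norm_nonneg _)
              rw [abs_le]
              exact ⟨by linarith [(hlam i).1], le_of_lt (hlam i).2⟩
          _ = ‖v i‖ := one_mul _
    _ < (∑ i, ‖v i‖) + 1 := by linarith

lemma aux_cover (hd : 2 ≤ d) (v : Fin d → E d) (hv : LinearIndependent ℝ v)
    (M : Set (E d))
    (hM : M = {x : E d | ∃ lam : Fin d → ℝ,
      (∀ i, lam i ∈ Set.Ico (0 : ℝ) 1) ∧ x = ∑ i, lam i • v i})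
    (x₀ : E d) (ρ : ℝ) :
    ∃ (n : ℕ) (t : Fin n → Fin d → ℤ),
      Metric.ball x₀ ρ ⊆ ⋃ j : Fin n, (fun x => x + ∑ i, (t j i : ℝ) • v i) '' M := by
  classical
  haveI : Nonempty (Fin d) := ⟨⟨0, by omega⟩⟩
  set b := basisOfLinearIndependentOfCardEqFinrank hv
    (by simp [finrank_euclideanSpace_fin]) with hb
  have hbv : ∀ i, b i = v i := fun i => by
    rw [hb, coe_basisOfLinearIndependentOfCardEqFinrank]
  have hMmem : ∀ (y : E d), (∀ i, b.repr y i ∈ Set.Ico (0:ℝ) 1) → y ∈ M := by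
    intro y hy
    rw [hM]
    refine ⟨fun i => b.repr y i, hy, ?_⟩
    conv_lhs => rw [← b.sum_repr y]
    exact Finset.sum_congr rfl fun i _ => by rw [hbv]
  set L : Fin d → (E d →L[ℝ] ℝ) :=
    fun i => LinearMap.toContinuousLinearMap (b.coord i) with hL
  have hLapp : ∀ i (y : E d), L i y = b.repr y i := fun i y => by
    simp [hL, Module.Basis.coord_apply]
  set Creal : ℝ := (∑ i, ‖L i‖) * (‖x₀‖ + |ρ|) + 1 with hCreal
  have hbound : ∀ i, ∀ x ∈ Metric.ball x₀ ρ, |b.repr x i| ≤ Creal := by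
    intro i x hx
    have hxn : ‖x‖ ≤ ‖x₀‖ + |ρ| := by
      have h1 : dist x x₀ < ρ := Metric.mem_ball.1 hx
      have := norm_sub_norm_le x x₀
      rw [← dist_eq_norm] at this
      have : ‖x‖ ≤ ‖x₀‖ + dist x x₀ := by linarith
      have hρ : dist x x₀ ≤ |ρ| := le_trans (le_of_lt h1) (le_abs_self ρ)
      linarith
    have h2 : |b.repr x i| ≤ ‖L i‖ * ‖x‖ := by
      rw [← hLapp i x, ← Real.norm_eq_abs]
      exact (L i).le_opNorm x
    have h3 : ‖L i‖ ≤ ∑ j, ‖L j‖ :=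
      Finset.single_le_sum (fun j _ => norm_nonneg _) (Finset.mem_univ i)
    calc |b.repr x i| ≤ ‖L i‖ * ‖x‖ := h2
      _ ≤ (∑ j, ‖L j‖) * (‖x₀‖ + |ρ|) := by
          apply mul_le_mul h3 hxn (norm_nonneg _)
          exact Finset.sum_nonneg fun j _ => norm_nonneg _
      _ ≤ Creal := by rw [hCreal]; linarith
  set K : ℤ := ⌈Creal⌉ with hK
  set s : Finset (Fin d → ℤ) := Fintype.piFinset fun _ => Finset.Icc (-K-1) (K+1) with hs
  refine ⟨s.card, fun j => (s.equivFin.symm j : Fin d → ℤ), ?_⟩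
  intro x hx
  set z : Fin d → ℤ := fun i => ⌊b.repr x i⌋ with hz
  have hzs : z ∈ s := by
    rw [hs, Fintype.mem_piFinset]
    intro i
    rw [Finset.mem_Icc]
    have hb1 := hbound i x hx
    have hfl : (⌊b.repr x i⌋ : ℝ) ≤ b.repr x i := Int.floor_le _
    have hfl2 : b.repr x i - 1 < (⌊b.repr x i⌋ : ℝ) := Int.sub_one_lt_floor _
    have hcu : Creal ≤ (K : ℝ) := Int.le_ceil _
    constructor
    · have : ((-K - 1 : ℤ) : ℝ) < (z i : ℝ) := by
        push_cast
        have : -Creal ≤ b.repr x i := by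
          have := abs_le.1 hb1; linarith
        simp only [hz]
        nlinarith
      exact le_of_lt (by exact_mod_cast this)
    · have : (z i : ℝ) ≤ ((K + 1 : ℤ) : ℝ) := by
        push_cast
        have : b.repr x i ≤ Creal := (abs_le.1 hb1).2
        simp only [hz]
        nlinarith
      exact_mod_cast this
  set j : Fin s.card := s.equivFin ⟨z, hzs⟩ with hj
  have htj : ((s.equivFin.symm j : s) : Fin d → ℤ) = z := by
    rw [hj, Equiv.symm_apply_apply]
  apply Set.mem_iUnion.2
  refine ⟨j, ?_⟩
  set m : E d := x - ∑ i, (z i : ℝ) • v i with hm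
  have hreprm : ∀ i, b.repr m i = Int.fract (b.repr x i) := by
    intro i
    have hsum : (∑ i, (z i : ℝ) • v i) = ∑ i, (z i : ℝ) • b i :=
      Finset.sum_congr rfl fun i _ => by rw [hbv]
    rw [hm, map_sub, hsum]
    have := b.repr_sum_self fun i => (z i : ℝ)
    rw [Finsupp.sub_apply]
    rw [show (b.repr (∑ i, (z i : ℝ) • b i)) (i) = (z i : ℝ) by rw [this]]
    rfl
  have hmM : m ∈ M := by
    apply hMmem
    intro i
    rw [hreprm i]
    exact ⟨Int.fract_nonneg _, Int.fract_lt_one _⟩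
  refine ⟨m, hmM, ?_⟩
  show m + ∑ i, (((s.equivFin.symm j : s) : Fin d → ℤ) i : ℝ) • v i = x
  rw [htj, hm]
  abel
end Cover

/-- rigidity estimate on a flat torus, deduced from the rigidity
estimate on balls. The torus `[M]` is represented by its fundamental domain `M`
together with lattice-periodic functions. The second conjunct is the "moreover"
part: for a ball `B = B(x₀, ρ) ⊇ M` covered by `n` lattice translates of `M`, one
can take `C₁([M]) = √n C₁(B)` and `C₂([M],p) = n^{1/p} C₂(B,p)`. -/
theorem stmt19 (d : ℕ) (hd : 2 ≤ d) (p : ℝ) (hp : (2 * d) / (2 + d) ≤ p)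
    (v : Fin d → E d) (hv : LinearIndependent ℝ v)
    (M : Set (E d))
    (hM : M = {x : E d | ∃ lam : Fin d → ℝ,
      (∀ i, lam i ∈ Set.Ico (0 : ℝ) 1) ∧ x = ∑ i, lam i • v i})
    (C1 C2 : E d → ℝ → ℝ)
    -- the rigidity estimate holds on every ball `B(x₀, ρ)` with constants
    -- `C1 x₀ ρ` and `C2 x₀ ρ`:
    (hrig : ∀ (x₀ : E d) (ρ : ℝ), 0 < ρ →
      ∀ (V : E d → Mat d) (W : Fin d → Fin d → Fin d → E d → ℝ),
        MemLp (fun x => fnorm (V x)) 2 (volume.restrict (Metric.ball x₀ ρ)) →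
        HasWeakCurl (Metric.ball x₀ ρ) V W →
        (∀ i k l : Fin d, MemLp (W i k l) (ENNReal.ofReal p)
          (volume.restrict (Metric.ball x₀ ρ))) →
        ∃ R ∈ SO d, L2norm (Metric.ball x₀ ρ) (fun x => fnorm (V x - R)) ≤
          C1 x₀ ρ * L2norm (Metric.ball x₀ ρ) (fun x => distSO (V x)) +
            C2 x₀ ρ * LpCurlNorm (Metric.ball x₀ ρ) W p) :
    -- the rigidity estimate holds on the torus:
    (∃ C1' C2' : ℝ,
      ∀ (V : E d → Mat d) (W : Fin d → Fin d → Fin d → E d → ℝ),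
        LatticePeriodic v V → (∀ i k l, LatticePeriodic v (W i k l)) →
        MemLp (fun x => fnorm (V x)) 2 (volume.restrict M) →
        HasWeakCurl Set.univ V W →
        (∀ i k l : Fin d, MemLp (W i k l) (ENNReal.ofReal p) (volume.restrict M)) →
        ∃ R ∈ SO d, L2norm M (fun x => fnorm (V x - R)) ≤
          C1' * L2norm M (fun x => distSO (V x)) + C2' * LpCurlNorm M W p) ∧
    -- moreover, with explicit constants built from a ball containing `M` which is
    -- covered by `n` lattice translates of `M`:
    (∀ (x₀ : E d) (ρ : ℝ), 0 < ρ → M ⊆ Metric.ball x₀ ρ →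
      ∀ (n : ℕ) (t : Fin n → Fin d → ℤ),
        Metric.ball x₀ ρ ⊆ ⋃ j : Fin n, (fun x => x + ∑ i, (t j i : ℝ) • v i) '' M →
        ∀ (V : E d → Mat d) (W : Fin d → Fin d → Fin d → E d → ℝ),
          LatticePeriodic v V → (∀ i k l, LatticePeriodic v (W i k l)) →
          MemLp (fun x => fnorm (V x)) 2 (volume.restrict M) →
          HasWeakCurl Set.univ V W →
          (∀ i k l : Fin d, MemLp (W i k l) (ENNReal.ofReal p) (volume.restrict M)) →
          ∃ R ∈ SO d, L2norm M (fun x => fnorm (V x - R)) ≤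
            Real.sqrt n * C1 x₀ ρ * L2norm M (fun x => distSO (V x)) +
              (n : ℝ) ^ (1 / p) * C2 x₀ ρ * LpCurlNorm M W p) := by
  have hp1 : 1 ≤ p := by
    have hd2 : (2:ℝ) ≤ d := by exact_mod_cast hd
    have hpos : (0:ℝ) < 2 + d := by linarith
    refine le_trans ?_ hp
    rw [le_div_iff₀ hpos]
    linarith
  constructor
  · set ρ0 : ℝ := (∑ i, ‖v i‖) + 1 with hρ0
    have hρ0pos : 0 < ρ0 := by
      have : 0 ≤ ∑ i, ‖v i‖ := Finset.sum_nonneg fun i _ => norm_nonneg _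
      rw [hρ0]; linarith
    have hMB := aux_M_subset v M hM
    obtain ⟨n, t, hcov⟩ := aux_cover hd v hv M hM (0 : E d) ρ0
    exact ⟨Real.sqrt n * C1 0 ρ0, (n:ℝ)^(1/p) * C2 0 ρ0,
      fun V W hVper hWper memV curlU memW =>
        aux_main hd hp1 v M 0 ρ0 hρ0pos hMB t hcov (C1 0 ρ0) (C2 0 ρ0)
          (hrig 0 ρ0 hρ0pos) V W hVper hWper memV curlU memW⟩
  · intro x₀ ρ hρ hMB n t hcov V W hVper hWper memV curlU memW
    exact aux_main hd hp1 v M x₀ ρ hρ hMB t hcov (C1 x₀ ρ) (C2 x₀ ρ)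
      (hrig x₀ ρ hρ) V W hVper hWper memV curlU memW
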